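/- Let N ≥ 2 and let f : Fin N → Fin r and g : Fin N → Fin c represent two crisp partitions of N objects. Let p_U(i) = |f⁻¹(i)|/N and p_V(j) = |g⁻¹(j)|/N be the empirical marginal distributions and P(i,j) = |f⁻¹(i) ∩ g⁻¹(j)|/N the empirical joint distribution, and define the quadratic variation of information VI₂(U,V) = 2·H₂(P) - H₂(p_U) - H₂(p_V), where H₂(x) = 2·(1 - ∑ of the squares of the entries of x). Then VI₂(U,V) = (2/N)·(N-1)·(1 - RI(U,V)), where RI(U,V) = (k₁₁ + k₀₀)/(N·(N-1)/2) is the Rand index. -/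

import Mathlib

/-
For a labelling `h` of `N` objects, `∑ b |h⁻¹(b)|²` counts the ordered pairs `(x, y)`
with `h x = h y`, which is `N` plus twice the number of unordered pairs of distinct objects in a
common cluster. Hence each quadratic entropy is `4 / N²` times the number of pairs the partition
separates, and `VI₂ = 4 (K_U + K_V - 2 k₁₁) / N²`, where `K_U`, `K_V` count the pairs joined by
each partition. By inclusion–exclusion, `K_U + K_V - 2 k₁₁ = k₁₀ + k₀₁ = (1 - RI) · N (N - 1) / 2`.
-/

/-- The quadratic entropy of a finitely supported probability distribution. -/
noncomputable def quadEntropy {α : Type*} [Fintype α] (x : α → ℝ) : ℝ :=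
  2 * (1 - ∑ i, (x i) ^ 2)

/-- The fiber of `i` under `f`, i.e. the cluster of objects labelled `i`. -/
def fiber {N r : ℕ} (f : Fin N → Fin r) (i : Fin r) : Finset (Fin N) :=
  Finset.univ.filter fun x => f x = i

/-- The unordered pairs of distinct objects among `N` objects. -/
def distinctPairs (N : ℕ) : Finset (Sym2 (Fin N)) :=
  Finset.univ.filter fun e => ¬ e.IsDiag

/-- `k₁₁`: the number of unordered pairs of distinct objects lying in the same
cluster of `f` and in the same cluster of `g`. -/
def k11 {N r c : ℕ} (f : Fin N → Fin r) (g : Fin N → Fin c) : ℕ :=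
  ((distinctPairs N).filter fun e => (e.map f).IsDiag ∧ (e.map g).IsDiag).card

/-- `k₀₀`: the number of unordered pairs of distinct objects lying in different
clusters of `f` and in different clusters of `g`. -/
def k00 {N r c : ℕ} (f : Fin N → Fin r) (g : Fin N → Fin c) : ℕ :=
  ((distinctPairs N).filter fun e => ¬ (e.map f).IsDiag ∧ ¬ (e.map g).IsDiag).card

/-- The Rand index of two crisp partitions of `N` objects. -/
noncomputable def randIndex {N r c : ℕ} (f : Fin N → Fin r) (g : Fin N → Fin c) : ℝ :=
  ((k11 f g : ℝ) + (k00 f g : ℝ)) / ((N : ℝ) * ((N : ℝ) - 1) / 2)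

open Finset

theorem card_filter_not_and_not_add_card_filter_add_card_filter {α : Type*} [DecidableEq α]
    (s : Finset α) (p q : α → Prop) [DecidablePred p] [DecidablePred q] :
    #{x ∈ s | ¬p x ∧ ¬q x} + #{x ∈ s | p x} + #{x ∈ s | q x} = #s + #{x ∈ s | p x ∧ q x} := by
  rw [add_assoc, ← card_union_add_card_inter, ← filter_or, ← filter_and]
  simp_rw [← not_or]
  have := s.card_filter_add_card_filter_not (fun x => p x ∨ q x)
  omega

section Counting

variable {α β : Type*} [Fintype α] [DecidableEq α] [DecidableEq β]

theorem two_mul_card_filter_not_isDiag (p : Sym2 α → Prop) [DecidablePred p] :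
    2 * #{e : Sym2 α | ¬e.IsDiag ∧ p e} = #{xy : α × α | xy.1 ≠ xy.2 ∧ p s(xy.1, xy.2)} := by
  convert (SimpleGraph.fromRel fun x y => p s(x, y)).two_mul_card_edgeFinset using 3
  · ext e
    induction e with
    | _ x y => simp [Sym2.eq_swap]
  · simp [Sym2.eq_swap]

theorem sum_card_fiber_sq_eq_card_filter [Fintype β] (h : α → β) :
    ∑ b, #{x | h x = b} ^ 2 = #{xy : α × α | h xy.1 = h xy.2} := by
  simp_rw [sq, ← card_product]
  rw [← card_biUnion]
  · congr 1; ext ⟨x, y⟩; simp [eq_comm]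
  · intro b _ b' _ hb
    simp_all [Function.onFun, disjoint_left]

def sameClusterPairs (h : α → β) : ℕ := #{e : Sym2 α | ¬e.IsDiag ∧ (e.map h).IsDiag}

theorem sum_card_fiber_sq_eq_card_add_two_mul [Fintype β] (h : α → β) :
    ∑ b, #{x | h x = b} ^ 2 = Fintype.card α + 2 * sameClusterPairs h := by
  rw [sum_card_fiber_sq_eq_card_filter, sameClusterPairs, two_mul_card_filter_not_isDiag,
    ← card_filter_add_card_filter_not (p := fun xy : α × α => xy.1 = xy.2), filter_filter,
    filter_filter]
  congr 1
  · rw [← card_univ, ← diag_card (univ : Finset α), diag_eq_filter, univ_product_univ]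
    congr 1; ext ⟨x, y⟩; simp +contextual
  · congr 1; ext ⟨x, y⟩; simp [and_comm]

theorem quadEntropy_card_fiber_div_card [Fintype β] (h : α → β) :
    quadEntropy (fun b => (#{x | h x = b} : ℝ) / Fintype.card α)
      = 2 * (1 - (Fintype.card α + 2 * sameClusterPairs h) / (Fintype.card α : ℝ) ^ 2) := by
  have hsum := congrArg (Nat.cast (R := ℝ)) (sum_card_fiber_sq_eq_card_add_two_mul h)
  push_cast at hsum
  simp only [quadEntropy, div_pow, ← sum_div, hsum]

end Counting

theorem filter_distinctPairs {N : ℕ} (p : Sym2 (Fin N) → Prop) [DecidablePred p] :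
    (distinctPairs N).filter p = ({e | ¬e.IsDiag ∧ p e} : Finset _) :=
  filter_filter _ _ _

theorem card_distinctPairs (N : ℕ) : #(distinctPairs N) = N.choose 2 := by
  rw [← Fintype.card_fin N, ← Sym2.card_subtype_not_diag, Fintype.card_subtype, Fintype.card_fin]
  rfl

section Partitions

variable {N r c : ℕ} (f : Fin N → Fin r) (g : Fin N → Fin c)

theorem fiber_inter_fiber (ij : Fin r × Fin c) :
    fiber f ij.1 ∩ fiber g ij.2 = ({x | (f x, g x) = ij} : Finset (Fin N)) := by
  ext x
  simp [fiber, Prod.ext_iff]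

theorem k11_eq_sameClusterPairs : k11 f g = sameClusterPairs fun x => (f x, g x) := by
  rw [k11, filter_distinctPairs, sameClusterPairs]
  congr 1
  ext e
  induction e with
  | _ x y => simp [Prod.ext_iff]

theorem k00_add_sameClusterPairs_add_sameClusterPairs :
    k00 f g + sameClusterPairs f + sameClusterPairs g = N.choose 2 + k11 f g := by
  rw [k00, k11, sameClusterPairs, sameClusterPairs, ← filter_distinctPairs,
    ← filter_distinctPairs, ← card_distinctPairs]
  exact card_filter_not_and_not_add_card_filter_add_card_filter _ _ _

end Partitions

theorem VI2_eq_randIndex {N r c : ℕ} (hN : 2 ≤ N)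
    (f : Fin N → Fin r) (g : Fin N → Fin c) :
    2 * quadEntropy (fun ij : Fin r × Fin c =>
          (((fiber f ij.1) ∩ (fiber g ij.2)).card : ℝ) / N)
      - quadEntropy (fun i : Fin r => ((fiber f i).card : ℝ) / N)
      - quadEntropy (fun j : Fin c => ((fiber g j).card : ℝ) / N)
      = (2 / (N : ℝ)) * ((N : ℝ) - 1) * (1 - randIndex f g) := by
  have hjoint := quadEntropy_card_fiber_div_card fun x => (f x, g x)
  have hf := quadEntropy_card_fiber_div_card f
  have hg := quadEntropy_card_fiber_div_card g
  simp only [Fintype.card_fin, ← k11_eq_sameClusterPairs] at hjoint hf hg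
  have hcount :=
    congrArg (Nat.cast (R := ℝ)) (k00_add_sameClusterPairs_add_sameClusterPairs f g)
  push_cast [Nat.cast_choose_two] at hcount
  simp only [fiber_inter_fiber]
  unfold fiber
  rw [hjoint, hf, hg, randIndex]
  have hN0 : (N : ℝ) ≠ 0 := by positivity
  have hN1 : (N : ℝ) - 1 ≠ 0 := by
    have : (2 : ℝ) ≤ N := by exact_mod_cast hN
    linarith
  field_simp
  linear_combination 2 * hcount
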